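/- arXiv:2605.29013 — 3 statements merged into one kernel-verified Lean document; each statement's English description precedes it below -/
import Mathlib

section
/- Fix U ∈ R^{N×m}, W ∈ R^{m×n}. Define the set W₀ of matrices W' ∈ R^{m×n} such that there exists a matrix K ∈ R^{N×n} with all entries in (−1, +∞) satisfying U(W' − W) = K ∘ (UW). Then W₀ is a convex subset of R^{m×n}. -/
/-- The locally observable neighborhood
W₀ = {W' | ∃ K with entries in (-1,∞), U(W'-W) = K ∘ (UW)} is convex. -/
theorem stmt_3 (N m n : ℕ)
    (U : Matrix (Fin N) (Fin m) ℝ) (W : Matrix (Fin m) (Fin n) ℝ) :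
    Convex ℝ {W' : Matrix (Fin m) (Fin n) ℝ |
      ∃ K : Matrix (Fin N) (Fin n) ℝ, (∀ i j, -1 < K i j) ∧
        U * (W' - W) = Matrix.of fun i j => K i j * (U * W) i j} := by
  rintro W₁ ⟨K₁, hK₁, h₁⟩ W₂ ⟨K₂, hK₂, h₂⟩ a b ha hb hab
  refine ⟨a • K₁ + b • K₂, fun i j => ?_, ?_⟩
  · have : -(1:ℝ) = a * (-1) + b * (-1) := by ring_nf; linarith
    rw [this]
    rcases eq_or_lt_of_le ha with h | h
    · rcases eq_or_lt_of_le hb with h' | h'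
      · exfalso; rw [← h, ← h'] at hab; norm_num at hab
      · simp only [Matrix.add_apply, Matrix.smul_apply, smul_eq_mul, ← h]
        simpa using mul_lt_mul_of_pos_left (hK₂ i j) h'
    · rcases eq_or_lt_of_le hb with h' | h'
      · simp only [Matrix.add_apply, Matrix.smul_apply, smul_eq_mul, ← h']
        simpa using mul_lt_mul_of_pos_left (hK₁ i j) h
      · exact add_lt_add (mul_lt_mul_of_pos_left (hK₁ i j) h)
          (mul_lt_mul_of_pos_left (hK₂ i j) h')
  · have key : U * (a • W₁ + b • W₂ - W)
        = a • (U * (W₁ - W)) + b • (U * (W₂ - W)) := by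
      have : a • W₁ + b • W₂ - W = a • (W₁ - W) + b • (W₂ - W) := by
        ext i j
        simp only [Matrix.add_apply, Matrix.sub_apply, Matrix.smul_apply,
          smul_eq_mul]
        linear_combination (W i j) * hab
      rw [this, Matrix.mul_add, Matrix.mul_smul, Matrix.mul_smul]
    rw [key, h₁, h₂]
    ext i j
    simp [Matrix.add_apply, mul_add, mul_comm, mul_assoc, mul_left_comm]
    ring
end

section
/- Let A ∈ R^{k×n} and let A_{k+1} = [A; a] be the matrix obtained by appending a row a ∈ R^{1×n}. If A_{k+1} has full row rank k+1, then the Moore–Penrose inverse satisfies A_{k+1}† = [A† − b d, b], where d = a A†, c = a − d A, and b = c† = cᵀ/(c cᵀ); in particular A_{k+1} A_{k+1}† = I_{k+1}. -/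
open Matrix

private lemma isUnit_of_rank_eq_card {k : ℕ} (M : Matrix (Fin k) (Fin k) ℝ)
    (h : M.rank = k) : IsUnit M := by
  rw [← Matrix.mulVec_surjective_iff_isUnit]
  have htop : LinearMap.range M.mulVecLin = ⊤ := by
    apply Submodule.eq_top_of_finrank_eq
    have h1 : Module.finrank ℝ (LinearMap.range M.mulVecLin) = M.rank := rfl
    rw [h1, h, Module.finrank_fintype_fun_eq_card, Fintype.card_fin]
  have hs := LinearMap.range_eq_top.mp htop
  intro v
  obtain ⟨w, hw⟩ := hs v
  exact ⟨w, by simpa using hw⟩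

/-- Greville's formula: let A ∈ ℝ^{k×n} and A' = [A; a] the matrix
with the row a appended. If A' has full row rank k+1 then the matrix
P = [A† − bᵀd, b] (with A† = Aᵀ(AAᵀ)⁻¹, d = aA†, c = a − dA, b = cᵀ/(ccᵀ))
satisfies the four Penrose conditions for A', i.e. it is the Moore–Penrose
inverse of A'; in particular A' P = I. -/
theorem stmt_5 (k n : ℕ) (A : Matrix (Fin k) (Fin n) ℝ) (a : Fin n → ℝ)
    (A' : Matrix (Fin (k + 1)) (Fin n) ℝ) (hA' : A' = Matrix.of (Fin.snoc A a))
    (hrank : A'.rank = k + 1)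
    (Adag : Matrix (Fin n) (Fin k) ℝ) (hAdag : Adag = Aᵀ * (A * Aᵀ)⁻¹)
    (d : Fin k → ℝ) (hd : d = Matrix.vecMul a Adag)
    (c : Fin n → ℝ) (hc : c = a - Matrix.vecMul d A)
    (b : Fin n → ℝ) (hb : b = fun i => c i / (∑ l, c l * c l))
    (P : Matrix (Fin n) (Fin (k + 1)) ℝ)
    (hP : P = Matrix.of fun i j =>
      Fin.lastCases (b i) (fun j' : Fin k => Adag i j' - b i * d j') j) :
    A' * P * A' = A' ∧ P * A' * P = P ∧
      (A' * P)ᵀ = A' * P ∧ (P * A')ᵀ = P * A' ∧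
      A' * P = 1 := by
  -- entries of A'
  have hA'c : ∀ (i : Fin k) (l : Fin n), A' i.castSucc l = A i l := by
    intro i l; rw [hA']; simp; exact congrFun (Fin.snoc_castSucc (α := fun _ => Fin n → ℝ) _ _ _) l
  have hA'l : ∀ l : Fin n, A' (Fin.last k) l = a l := by
    intro l; rw [hA']; simp; exact congrFun (Fin.snoc_last (α := fun _ => Fin n → ℝ) _ _) l
  -- linear independence of rows of A'
  have hfr : LinearIndependent ℝ (fun i => A' i) := by
    rw [linearIndependent_iff_card_eq_finrank_span]
    rw [Fintype.card_fin, Set.finrank]; exact hrank.symm.trans (rank_eq_finrank_span_row A')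
  -- rows of A are linearly independent
  have hAeq : (fun i => A i) = fun i : Fin k => A' i.castSucc := by
    funext i l; rw [hA'c]
  have hliA : LinearIndependent ℝ (fun i => A i) := by
    rw [hAeq]; exact hfr.comp Fin.castSucc (Fin.castSucc_injective k)
  have hrankA : A.rank = k := by
    have := hliA.rank_matrix
    simpa using this
  have hU : IsUnit (A * Aᵀ) := by
    apply isUnit_of_rank_eq_card
    rw [rank_self_mul_transpose, hrankA]
  have hUdet : IsUnit (A * Aᵀ).det := (Matrix.isUnit_iff_isUnit_det _).mp hU
  have hRight : A * Adag = 1 := by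
    rw [hAdag, ← Matrix.mul_assoc, Matrix.mul_nonsing_inv _ hUdet]
  -- A *ᵥ c = 0
  have hAdagT : Adagᵀ = (A * Aᵀ)⁻¹ * A := by
    rw [hAdag, transpose_mul, transpose_transpose, transpose_nonsing_inv,
      transpose_mul, transpose_transpose]
  have hd' : d = Adagᵀ *ᵥ a := by rw [hd, Matrix.mulVec_transpose]
  have hAc : A *ᵥ c = 0 := by
    rw [hc, Matrix.mulVec_sub, ← Matrix.mulVec_transpose, hd', hAdagT,
      mulVec_mulVec, mulVec_mulVec, ← Matrix.mul_assoc,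
      Matrix.mul_nonsing_inv _ hUdet, Matrix.one_mul, sub_self]
  have hAc' : ∀ i : Fin k, ∑ l, A i l * c l = 0 := by
    intro i
    have := congrFun hAc i
    simpa [Matrix.mulVec, dotProduct] using this
  -- (d ᵥ* A) ⬝ c = 0
  have hdAc : ∑ l, (Matrix.vecMul d A) l * c l = 0 := by
    simp only [Matrix.vecMul, dotProduct, Finset.sum_mul]
    rw [Finset.sum_comm]
    refine Finset.sum_eq_zero fun j _ => ?_
    simp only [mul_assoc, ← Finset.mul_sum]
    rw [hAc' j, mul_zero]
  have hac : ∑ l, a l * c l = ∑ l, c l * c l := by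
    have ha : ∀ l, a l = c l + (Matrix.vecMul d A) l := by
      intro l; rw [hc]; simp
    calc ∑ l, a l * c l = ∑ l, (c l * c l + (Matrix.vecMul d A) l * c l) := by
          refine Finset.sum_congr rfl fun l _ => ?_
          rw [ha l, add_mul]
      _ = ∑ l, c l * c l := by rw [Finset.sum_add_distrib, hdAc, add_zero]
  -- c ≠ 0
  have hcne : c ≠ 0 := by
    intro h0
    have ha : a = Matrix.vecMul d A := by rwa [hc, sub_eq_zero] at h0
    have hsum : ∑ i, (Fin.snoc d (-1) : Fin (k + 1) → ℝ) i • A' i = 0 := by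
      rw [Fin.sum_univ_castSucc]
      simp only [Fin.snoc_castSucc, Fin.snoc_last]
      funext l
      simp only [Finset.sum_apply, Pi.add_apply, Pi.smul_apply, Pi.zero_apply,
        smul_eq_mul, hA'l]
      have : ∀ i : Fin k, d i * A' i.castSucc l = d i * A i l := by
        intro i; rw [hA'c]
      rw [Finset.sum_congr rfl fun i _ => this i, ha]
      simp [Matrix.vecMul, dotProduct]
    have := Fintype.linearIndependent_iff.mp hfr (Fin.snoc d (-1)) hsum (Fin.last k)
    simp at this
  have hS : 0 < ∑ l, c l * c l := by
    obtain ⟨l0, hl0⟩ := Function.ne_iff.mp hcne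
    refine Finset.sum_pos' (fun l _ => mul_self_nonneg _)
      ⟨l0, Finset.mem_univ _, mul_self_pos.mpr hl0⟩
  set S := ∑ l, c l * c l with hSdef
  -- key scalar identities
  have hAb : ∀ i : Fin k, ∑ l, A i l * b l = 0 := by
    intro i
    rw [hb]
    simp only [div_eq_mul_inv]
    rw [show ∑ l, A i l * (c l * S⁻¹) = (∑ l, A i l * c l) * S⁻¹ by
      rw [Finset.sum_mul]; exact Finset.sum_congr rfl fun l _ => (mul_assoc _ _ _).symm]
    rw [hAc' i, zero_mul]
  have hab : ∑ l, a l * b l = 1 := by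
    rw [hb]
    simp only [div_eq_mul_inv]
    rw [show ∑ l, a l * (c l * S⁻¹) = (∑ l, a l * c l) * S⁻¹ by
      rw [Finset.sum_mul]; exact Finset.sum_congr rfl fun l _ => (mul_assoc _ _ _).symm]
    rw [hac, mul_inv_cancel₀ hS.ne']
  have had : ∀ j : Fin k, ∑ l, a l * Adag l j = d j := by
    intro j; rw [hd]; simp [Matrix.vecMul, dotProduct]
  -- A' * P = 1
  have hAP : A' * P = 1 := by
    ext i j
    rw [Matrix.mul_apply]
    induction j using Fin.lastCases with
    | last =>
      induction i using Fin.lastCases with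
      | last =>
        simp only [hP, Matrix.of_apply, Fin.lastCases_last, hA'l]
        rw [hab, Matrix.one_apply_eq]
      | cast i =>
        simp only [hP, Matrix.of_apply, Fin.lastCases_last, hA'c]
        rw [hAb i, Matrix.one_apply_ne (by simp [Fin.ext_iff, Fin.castSucc]; omega)]
    | cast j =>
      induction i using Fin.lastCases with
      | last =>
        simp only [hP, Matrix.of_apply, Fin.lastCases_castSucc, hA'l]
        have : ∑ l, a l * (Adag l j - b l * d j)
            = (∑ l, a l * Adag l j) - (∑ l, a l * b l) * d j := by
          rw [Finset.sum_mul, ← Finset.sum_sub_distrib]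
          exact Finset.sum_congr rfl fun l _ => by ring
        rw [this, had j, hab, one_mul, sub_self,
          Matrix.one_apply_ne (by simp [Fin.ext_iff]; omega)]
      | cast i =>
        simp only [hP, Matrix.of_apply, Fin.lastCases_castSucc, hA'c]
        have : ∑ l, A i l * (Adag l j - b l * d j)
            = (∑ l, A i l * Adag l j) - (∑ l, A i l * b l) * d j := by
          rw [Finset.sum_mul, ← Finset.sum_sub_distrib]
          exact Finset.sum_congr rfl fun l _ => by ring
        rw [this, hAb i, zero_mul, sub_zero]
        have h1 : ∑ l, A i l * Adag l j = (A * Adag) i j := (Matrix.mul_apply).symm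
        rw [h1, hRight]
        by_cases hij : i = j
        · subst hij; rw [Matrix.one_apply_eq, Matrix.one_apply_eq]
        · rw [Matrix.one_apply_ne hij, Matrix.one_apply_ne (by
            simpa [Fin.castSucc_inj] using hij)]
  -- P * A' = Adag * A + rank-one
  have hPA : P * A' = Adag * A + Matrix.of (fun i j => b i * c j) := by
    ext i j
    rw [Matrix.mul_apply, Fin.sum_univ_castSucc]
    simp only [hP, Matrix.of_apply, Fin.lastCases_castSucc, Fin.lastCases_last,
      hA'c, hA'l, Matrix.add_apply]
    have : ∑ l, (Adag i l - b i * d l) * A l j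
        = (∑ l, Adag i l * A l j) - b i * ∑ l, d l * A l j := by
      rw [Finset.mul_sum, ← Finset.sum_sub_distrib]
      exact Finset.sum_congr rfl fun l _ => by ring
    rw [this, ← Matrix.mul_apply]
    have hcj : c j = a j - ∑ l, d l * A l j := by
      rw [hc]; simp [Matrix.vecMul, dotProduct]
    rw [hcj]; ring
  have hsymPA : (P * A')ᵀ = P * A' := by
    rw [hPA, transpose_add]
    congr 1
    · rw [hAdag, Matrix.mul_assoc, transpose_mul, transpose_mul, transpose_transpose,
        transpose_nonsing_inv, transpose_mul, transpose_transpose, Matrix.mul_assoc]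
    · ext i j
      simp only [transpose_apply, Matrix.of_apply, hb]
      ring
  refine ⟨by rw [hAP, Matrix.one_mul], ?_, by rw [hAP, transpose_one], hsymPA, hAP⟩
  rw [Matrix.mul_assoc, hAP, Matrix.mul_one]
end

section
/- Consider a two-layer network with first-layer weights w¹_j ∈ R^m, biases b_j ∈ R, and output weights w²_j ∈ R (j = 1, ..., n), with output h(w, u) = Σ_j w²_j σ(u ᵀ w¹_j + b_j), σ the ReLU. Fix any inputs u₁, ..., u_N at which h is differentiable in the weights, and suppose w²_1 ≠ 0. Then the columns of the Jacobian of the map (weights) ↦ (h(·, u₁), ..., h(·, u_N)) are linearly dependent: specifically, (1/w²_1) · [columns ∂h/∂w¹_1]·w¹_1 + (b_1/w²_1) · [column ∂h/∂b_1] = [column ∂h/∂w²_1]. Hence the Jacobian never has full column rank. -/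
noncomputable def chi (a : ℝ) : ℝ := if 0 < a then 1 else 0

/-- for a two-layer ReLU network with output weights, at inputs
u₁,...,u_N where the network is differentiable in the weights and with
w²_1 ≠ 0, the Jacobian columns satisfy the linear relation
(1/w²_1)·Σ_l w¹_1(l)·[col ∂h/∂w¹_{1,l}] + (b_1/w²_1)·[col ∂h/∂b_1] = [col ∂h/∂w²_1],
hence the Jacobian does not have full column rank. -/
theorem stmt_14 (m n N : ℕ) [NeZero n]
    (u : Fin N → Fin m → ℝ) (w1 : Fin n → Fin m → ℝ) (bv w2 : Fin n → ℝ)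
    (hdiff : ∀ (i : Fin N) (j : Fin n), (∑ l, u i l * w1 j l) + bv j ≠ 0)
    (hw2 : w2 0 ≠ 0)
    (colW1 : Fin n → Fin m → Fin N → ℝ)
    (hcolW1 : colW1 = fun j l i => u i l * w2 j * chi ((∑ l', u i l' * w1 j l') + bv j))
    (colB : Fin n → Fin N → ℝ)
    (hcolB : colB = fun j i => w2 j * chi ((∑ l', u i l' * w1 j l') + bv j))
    (colW2 : Fin n → Fin N → ℝ)
    (hcolW2 : colW2 = fun j i =>
      ((∑ l', u i l' * w1 j l') + bv j) * chi ((∑ l', u i l' * w1 j l') + bv j)) :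
    ((1 / w2 0) • ∑ l, w1 0 l • colW1 0 l) + (bv 0 / w2 0) • colB 0 = colW2 0 ∧
    ¬ LinearIndependent ℝ (fun c : (Fin n × Fin m) ⊕ Fin n ⊕ Fin n =>
      Sum.elim (fun q => colW1 q.1 q.2) (Sum.elim colB colW2) c) := by
  have key : ((1 / w2 0) • ∑ l, w1 0 l • colW1 0 l) + (bv 0 / w2 0) • colB 0 = colW2 0 := by
    funext i
    simp only [hcolW1, hcolB, hcolW2, Pi.add_apply, Pi.smul_apply, Finset.sum_apply,
      smul_eq_mul]
    have : ∑ l, w1 0 l * (u i l * w2 0 * chi ((∑ l', u i l' * w1 0 l') + bv 0))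
        = (∑ l', u i l' * w1 0 l') * w2 0 * chi ((∑ l', u i l' * w1 0 l') + bv 0) := by
      rw [Finset.sum_mul, Finset.sum_mul]
      exact Finset.sum_congr rfl fun l _ => by ring
    rw [this]
    field_simp
  refine ⟨key, fun hli => ?_⟩
  rw [Fintype.linearIndependent_iff] at hli
  set g : (Fin n × Fin m) ⊕ Fin n ⊕ Fin n → ℝ :=
    Sum.elim (fun q => if q.1 = 0 then (1 / w2 0) * w1 0 q.2 else 0)
      (Sum.elim (fun j => if j = 0 then bv 0 / w2 0 else 0)
        (fun j => if j = 0 then -1 else 0)) with hg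
  have hsum : ∑ c, g c • (Sum.elim (fun q : Fin n × Fin m => colW1 q.1 q.2)
      (Sum.elim colB colW2) c) = 0 := by
    rw [Fintype.sum_sum_type, Fintype.sum_sum_type, Fintype.sum_prod_type]
    simp only [hg, Sum.elim_inl, Sum.elim_inr, ite_smul, zero_smul]
    rw [Finset.sum_comm]
    simp only [Finset.sum_ite_eq' Finset.univ (0 : Fin n), Finset.mem_univ, if_true]
    have h1 : ∑ l, ((1 / w2 0) * w1 0 l) • colW1 0 l
        = (1 / w2 0) • ∑ l, w1 0 l • colW1 0 l := by
      rw [Finset.smul_sum]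
      simp [smul_smul]
    rw [h1]
    rw [neg_smul, one_smul, ← key]
    abel
  have := hli g hsum (Sum.inr (Sum.inr 0))
  simp [hg] at this
end
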